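/- arXiv:2305.03876 — 5 statements merged into one kernel-verified Lean document; each statement's English description precedes it below -/
import Mathlib

section
/- Let R be a commutative ring in which 2 is invertible and let Q be a formal power series in one variable u over R whose constant coefficient is 1; write q_n for the coefficient of u^n in Q. Then Q(u)·Q(-u) = 1 if and only if for every r ≥ 1 one has q_{2r} = (-1)^{r-1}·(1/2)·q_r^2 + Σ_{s=1}^{r-1} (-1)^{s-1}·q_s·q_{2r-s}. -/
/-!
The series `P(u) = Q(u) Q(-u)` is invariant under `u ↦ -u`, so its odd coefficients vanish
once `2` is invertible. Its coefficient of `u^(2r)` is `∑_{i=0}^{2r} (-1)^i q_i q_{2r-i}`, whose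
summand is symmetric under `i ↦ 2r - i`; folding the sum onto `i ≤ r` (and using `q_0 = 1`)
shows that it is twice the difference of the two sides of the `r`-th relation. Hence `P = 1`
exactly when all the relations hold.
-/

open Finset

theorem Finset.sum_range_two_mul_add_one_of_symm {M : Type*} [AddCommMonoid M] (f : ℕ → M)
    (n : ℕ) (hf : ∀ i ≤ n, f (2 * n - i) = f i) :
    ∑ i ∈ range (2 * n + 1), f i = 2 • ∑ i ∈ range n, f i + f n := by
  have upper : ∑ i ∈ range n, f (n + 1 + i) = ∑ i ∈ range n, f i := by
    rw [← sum_range_reflect]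
    refine sum_congr rfl fun i hi => ?_
    have hi : i < n := mem_range.mp hi
    rw [← hf i hi.le]
    congr 1
    omega
  rw [show 2 * n + 1 = n + 1 + n by omega, sum_range_add, upper, sum_range_succ]
  abel

theorem neg_one_pow_sub_of_even {R : Type*} [Ring R] {m i : ℕ} (hm : Even m)
    (hi : i ≤ m) : (-1 : R) ^ (m - i) = (-1) ^ i := by
  rw [neg_one_pow_eq_pow_mod_two, neg_one_pow_eq_pow_mod_two (n := i)]
  obtain ⟨k, rfl⟩ := hm
  congr 1
  omega

namespace PowerSeries

variable {R : Type*} [CommRing R]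

theorem rescale_neg_one_rescale_neg_one (f : R⟦X⟧) : rescale (-1) (rescale (-1) f) = f := by
  rw [rescale_rescale, neg_one_mul, neg_neg, rescale_one, RingHom.id_apply]

theorem rescale_neg_one_mul_rescale_neg_one_self (f : R⟦X⟧) :
    rescale (-1) (f * rescale (-1) f) = f * rescale (-1) f := by
  rw [map_mul, rescale_neg_one_rescale_neg_one, mul_comm]

theorem coeff_eq_zero_of_rescale_neg_one_eq_self [Invertible (2 : R)] {f : R⟦X⟧}
    (hf : rescale (-1) f = f) {n : ℕ} (hn : Odd n) : coeff n f = 0 := by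
  have h := congrArg (coeff n) hf
  rw [coeff_rescale, hn.neg_one_pow, neg_one_mul, neg_eq_iff_add_eq_zero, ← two_mul] at h
  simpa using congrArg (⅟(2 : R) * ·) h

theorem coeff_two_mul_mul_rescale_neg_one_self (f : R⟦X⟧) (r : ℕ) :
    coeff (2 * r) (f * rescale (-1) f) =
      ∑ i ∈ range (2 * r + 1), (-1) ^ i * coeff i f * coeff (2 * r - i) f := by
  rw [coeff_mul, Nat.sum_antidiagonal_eq_sum_range_succ_mk]
  refine sum_congr rfl fun i hi => ?_
  rw [coeff_rescale, neg_one_pow_sub_of_even (even_two_mul r) (by grind)]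
  ring

theorem coeff_two_mul_mul_rescale_neg_one_self_of_one_le [Invertible (2 : R)] {f : R⟦X⟧}
    (hf : constantCoeff f = 1) {r : ℕ} (hr : 1 ≤ r) :
    coeff (2 * r) (f * rescale (-1) f) =
      2 * (coeff (2 * r) f - ((-1) ^ (r - 1) * ⅟2 * coeff r f ^ 2 +
        ∑ s ∈ Icc 1 (r - 1), (-1) ^ (s - 1) * coeff s f * coeff (2 * r - s) f)) := by
  set g : ℕ → R := fun i => (-1) ^ i * coeff i f * coeff (2 * r - i) f
  have g_symm : ∀ i ≤ r, g (2 * r - i) = g i := fun i hi => by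
    simp only [g, neg_one_pow_sub_of_even (even_two_mul r) (by omega : i ≤ 2 * r),
      Nat.sub_sub_self (by omega : i ≤ 2 * r)]
    ring
  have g_zero : g 0 = coeff (2 * r) f := by simp [g, hf]
  have g_mid : g r = -((-1) ^ (r - 1) * coeff r f ^ 2) := by
    obtain ⟨t, rfl⟩ : ∃ t, r = t + 1 := ⟨r - 1, by omega⟩
    simp only [g, show 2 * (t + 1) - (t + 1) = t + 1 by omega, Nat.add_sub_cancel, pow_succ]
    ring
  have shift : ∑ s ∈ Icc 1 (r - 1), (-1) ^ (s - 1) * coeff s f * coeff (2 * r - s) f =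
      -∑ s ∈ Ico 1 r, g s := by
    have interval : Icc 1 (r - 1) = Ico 1 r := by ext; simp only [mem_Icc, mem_Ico]; omega
    rw [← sum_neg_distrib, interval]
    refine sum_congr rfl fun s hs => ?_
    obtain ⟨t, rfl⟩ : ∃ t, s = t + 1 := ⟨s - 1, by grind⟩
    simp only [g, Nat.add_sub_cancel, pow_succ]
    ring
  rw [coeff_two_mul_mul_rescale_neg_one_self, sum_range_two_mul_add_one_of_symm g r g_symm,
    range_eq_Ico, sum_eq_sum_Ico_succ_bot (by omega), g_zero, g_mid, shift, nsmul_eq_mul,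
    Nat.cast_ofNat]
  linear_combination (-1) ^ (r - 1) * coeff r f ^ 2 * mul_invOf_self (2 : R)

end PowerSeries

open PowerSeries in
/-- For `Q ∈ R⟦u⟧` with constant coefficient `1` (and `2` invertible in `R`), the relation
`Q(u) * Q(-u) = 1` holds iff the coefficients `q_n` of `Q` satisfy Macdonald's relations
`q_{2r} = (-1)^(r-1) * (1/2) * q_r^2 + ∑_{s=1}^{r-1} (-1)^(s-1) * q_s * q_{2r-s}` for all `r ≥ 1`. -/
theorem mul_rescale_neg_one_eq_one_iff {R : Type*} [CommRing R] [Invertible (2 : R)]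
    (Q : PowerSeries R) (hQ : PowerSeries.constantCoeff Q = 1) :
    Q * PowerSeries.rescale (-1 : R) Q = 1 ↔
      ∀ r : ℕ, 1 ≤ r →
        PowerSeries.coeff (2 * r) Q =
          (-1 : R) ^ (r - 1) * ⅟(2 : R) * (PowerSeries.coeff r Q) ^ 2 +
            ∑ s ∈ Finset.Icc 1 (r - 1),
              (-1 : R) ^ (s - 1) * PowerSeries.coeff s Q
                * PowerSeries.coeff (2 * r - s) Q := by
  constructor
  · intro h r hr
    have hc := coeff_two_mul_mul_rescale_neg_one_self_of_one_le hQ hr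
    rwa [h, coeff_one, if_neg (by omega), eq_comm, (isUnit_of_invertible 2).mul_right_eq_zero,
      sub_eq_zero] at hc
  · intro h
    ext n
    rw [coeff_one]
    obtain ⟨k, rfl | rfl⟩ := Nat.even_or_odd' n
    · rcases Nat.eq_zero_or_pos k with rfl | hk
      · simp [coeff_mul, coeff_zero_eq_constantCoeff_apply, hQ]
      · rw [if_neg (by omega), coeff_two_mul_mul_rescale_neg_one_self_of_one_le hQ hk, h k hk,
          sub_self, mul_zero]
    · rw [if_neg (by omega)]
      exact coeff_eq_zero_of_rescale_neg_one_eq_self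
        (rescale_neg_one_mul_rescale_neg_one_self Q) (odd_two_mul_add_one k)
end

section
/- Let R be a commutative ring in which 2 is invertible. For every sequence c : ℕ → R there exists a unique formal power series Q in one variable u over R such that: the constant coefficient of Q is 1; for every k ≥ 0 the coefficient of u^{2k+1} in Q equals c_k; and Q(u)·Q(-u) = 1. (In other words, a solution of q(u)q(-u)=1 with constant term 1 is uniquely determined by a free choice of its odd-degree coefficients.) -/
/-!
Write `Q = E + O` with `E` even and `O` odd. Then `Q(u) Q(-u) = E² - O²`, so the odd part `O` can
be prescribed freely and `E` has to be the square root of `1 + O²` with constant term `1`. Since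
`2` is invertible, this square root exists (solve for its coefficients one at a time) and is
unique, because `a² = b²` forces `a = b` once `a + b` is a unit; uniqueness also makes it even.
For uniqueness of `Q`: if `Q, Q'` are solutions then `Q - Q'` is even, and
`(Q - Q') (Q(-u) + Q') = Q Q(-u) - Q' Q'(-u) = 0` with `Q(-u) + Q'` a unit.
-/

open Finset

theorem eq_of_sq_eq_sq_of_isUnit_add {A : Type*} [CommRing A] {a b : A} (h : a ^ 2 = b ^ 2)
    (hu : IsUnit (a + b)) : a = b :=
  sub_eq_zero.mp (hu.mul_left_eq_zero.mp (by linear_combination h))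

namespace PowerSeries

variable {R : Type*} [CommRing R]

theorem coeff_succ_mul_self (φ : R⟦X⟧) (n : ℕ) :
    coeff (n + 1) (φ * φ) = 2 * constantCoeff φ * coeff (n + 1) φ +
      ∑ i ∈ range n, coeff (i + 1) φ * coeff (n - i) φ := by
  rw [coeff_mul, Nat.sum_antidiagonal_eq_sum_range_succ_mk, sum_range_succ, sum_range_succ']
  simp only [Nat.add_sub_add_right, Nat.sub_zero, Nat.sub_self, coeff_zero_eq_constantCoeff_apply]
  ring

theorem constantCoeff_rescale (φ : R⟦X⟧) (a : R) :
    constantCoeff (rescale a φ) = constantCoeff φ := by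
  rw [← coeff_zero_eq_constantCoeff_apply, coeff_rescale, pow_zero, one_mul,
    coeff_zero_eq_constantCoeff_apply]

variable [Invertible (2 : R)]

theorem isUnit_of_constantCoeff_eq_two {φ : R⟦X⟧} (h : constantCoeff φ = 2) : IsUnit φ :=
  isUnit_iff_constantCoeff.mpr (h ▸ isUnit_of_invertible 2)

theorem rescale_neg_one_eq_self_iff {φ : R⟦X⟧} :
    rescale (-1 : R) φ = φ ↔ ∀ n, Odd n → coeff n φ = 0 := by
  constructor
  · intro h n hn
    have h_neg : -coeff n φ = coeff n φ := by
      simpa [coeff_rescale, hn.neg_one_pow] using congrArg (coeff n) h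
    exact (isUnit_of_invertible (2 : R)).mul_right_eq_zero.mp (by linear_combination -h_neg)
  · intro h
    ext n
    rw [coeff_rescale]
    rcases n.even_or_odd with hn | hn
    · rw [hn.neg_one_pow, one_mul]
    · rw [h n hn, mul_zero]

/-- The coefficient of degree `n + 1` solves `coeff (n + 1) (g * g) = coeff (n + 1) f` for it,
by `coeff_succ_mul_self` and `constantCoeff g = 1`. -/
noncomputable def sqrtCoeff (f : R⟦X⟧) : ℕ → R
  | 0 => 1
  | n + 1 => ⅟2 * (coeff (n + 1) f - ∑ i : Fin n, sqrtCoeff f (i + 1) * sqrtCoeff f (n - i))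

theorem exists_sq_eq_of_constantCoeff_eq_one {f : R⟦X⟧} (hf : constantCoeff f = 1) :
    ∃ g : R⟦X⟧, constantCoeff g = 1 ∧ g ^ 2 = f := by
  have hg₀ : constantCoeff (mk (sqrtCoeff f)) = 1 := by
    rw [← coeff_zero_eq_constantCoeff_apply, coeff_mk, sqrtCoeff]
  refine ⟨mk (sqrtCoeff f), hg₀, ?_⟩
  ext (_ | n)
  · simp [sq, hf, hg₀]
  · rw [sq, coeff_succ_mul_self, hg₀, coeff_mk, sqrtCoeff, ← Fin.sum_univ_eq_sum_range]
    simp only [coeff_mk]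
    linear_combination
      (coeff (n + 1) f - ∑ i : Fin n, sqrtCoeff f (i + 1) * sqrtCoeff f (n - i)) *
        mul_invOf_self (2 : R)

theorem exists_sq_eq_of_rescale_neg_one_eq_self {f : R⟦X⟧} (hf₀ : constantCoeff f = 1)
    (hf : rescale (-1 : R) f = f) :
    ∃ g : R⟦X⟧, constantCoeff g = 1 ∧ rescale (-1 : R) g = g ∧ g ^ 2 = f := by
  obtain ⟨g, hg₀, hg⟩ := exists_sq_eq_of_constantCoeff_eq_one hf₀
  refine ⟨g, hg₀, eq_of_sq_eq_sq_of_isUnit_add ?_ ?_, hg⟩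
  · rw [← map_pow, hg, hf]
  · exact isUnit_of_constantCoeff_eq_two (by rw [map_add, constantCoeff_rescale, hg₀]; norm_num)

theorem exists_mul_rescale_neg_one_eq_one_of_odd_coeffs (c : ℕ → R) :
    ∃ Q : R⟦X⟧, constantCoeff Q = 1 ∧ (∀ k, coeff (2 * k + 1) Q = c k) ∧
      Q * rescale (-1 : R) Q = 1 := by
  set O : R⟦X⟧ := mk fun n ↦ if Even n then 0 else c (n / 2)
  have hO₀ : constantCoeff O = 0 := by
    rw [← coeff_zero_eq_constantCoeff_apply, coeff_mk, if_pos (by decide)]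
  have hO_odd (k : ℕ) : coeff (2 * k + 1) O = c k := by
    rw [coeff_mk, if_neg (Nat.not_even_two_mul_add_one k)]
    congr 1
    omega
  have hO : rescale (-1 : R) O = -O := by
    ext n
    rw [coeff_rescale, map_neg, coeff_mk]
    rcases n.even_or_odd with hn | hn
    · simp [hn]
    · simp [hn.neg_one_pow, Nat.not_even_iff_odd.mpr hn]
  obtain ⟨E, hE₀, hE, hE_sq⟩ := exists_sq_eq_of_rescale_neg_one_eq_self (f := 1 + O ^ 2)
    (by simp [hO₀]) (by rw [map_add, map_one, map_pow, hO, neg_sq])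
  refine ⟨E + O, by rw [map_add, hE₀, hO₀, add_zero], fun k ↦ ?_, ?_⟩
  · rw [map_add, rescale_neg_one_eq_self_iff.mp hE _ (odd_two_mul_add_one k), hO_odd, zero_add]
  · rw [map_add, hE, hO]
    linear_combination hE_sq

theorem eq_of_mul_rescale_neg_one_eq_one {Q Q' : R⟦X⟧} (hQ₀ : constantCoeff Q = 1)
    (hQ'₀ : constantCoeff Q' = 1) (hodd : ∀ k, coeff (2 * k + 1) Q = coeff (2 * k + 1) Q')
    (hQ : Q * rescale (-1 : R) Q = 1) (hQ' : Q' * rescale (-1 : R) Q' = 1) : Q = Q' := by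
  have hD : rescale (-1 : R) (Q - Q') = Q - Q' := by
    refine rescale_neg_one_eq_self_iff.mpr fun n ⟨k, hk⟩ ↦ ?_
    rw [hk, map_sub, hodd, sub_self]
  have hu : IsUnit (rescale (-1 : R) Q + Q') :=
    isUnit_of_constantCoeff_eq_two (by rw [map_add, constantCoeff_rescale, hQ₀, hQ'₀]; norm_num)
  refine sub_eq_zero.mp (hu.mul_left_eq_zero.mp ?_)
  rw [map_sub] at hD
  linear_combination hQ - hQ' - Q' * hD

end PowerSeries

/-- Over a commutative ring in which `2` is invertible, a power series solution `Q` of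
`Q(u) * Q(-u) = 1` with constant term `1` exists and is uniquely determined by a free choice
`c : ℕ → R` of its odd-degree coefficients. -/
theorem existsUnique_powerSeries_of_odd_coeffs {R : Type*} [CommRing R] [Invertible (2 : R)]
    (c : ℕ → R) :
    ∃! Q : PowerSeries R,
      PowerSeries.constantCoeff Q = 1 ∧
      (∀ k : ℕ, PowerSeries.coeff (2 * k + 1) Q = c k) ∧
      Q * PowerSeries.rescale (-1 : R) Q = 1 := by
  obtain ⟨Q, hQ₀, hQ_odd, hQ⟩ := PowerSeries.exists_mul_rescale_neg_one_eq_one_of_odd_coeffs c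
  refine ⟨Q, ⟨hQ₀, hQ_odd, hQ⟩, fun Q' ⟨hQ'₀, hQ'_odd, hQ'⟩ ↦ ?_⟩
  exact PowerSeries.eq_of_mul_rescale_neg_one_eq_one hQ'₀ hQ₀
    (fun k ↦ (hQ'_odd k).trans (hQ_odd k).symm) hQ' hQ
end

section
/- Let σ be a finite type and R a commutative ring. For every n ≥ 1, the alternating sum Σ_{i=0}^{n} (-1)^i · e_i · h_{n-i} equals 0 in the multivariate polynomial ring over R in variables indexed by σ, where e_i denotes the i-th elementary symmetric polynomial in the variables and h_j denotes the j-th complete homogeneous symmetric polynomial (the sum of all monomials of total degree j) in the variables. -/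
open Finset MvPolynomial

/-- The sign-reversing involution: move the minimal variable of `S ∪ m`
between the finset `S` and the multiset `m`. -/
private noncomputable def asmh_inv {σ : Type*} [DecidableEq σ] [LinearOrder σ]
    (p : Finset σ × Multiset σ) : Finset σ × Multiset σ :=
  if h : (p.1.val + p.2).toFinset.Nonempty then
    let x := (p.1.val + p.2).toFinset.min' h
    if x ∈ p.1 then (p.1.erase x, x ::ₘ p.2) else (insert x p.1, p.2.erase x)
  else p

/-- The identity `e(-u)h(u) = 1`, coefficientwise: for `n ≥ 1`,
`∑_{i=0}^{n} (-1)^i e_i h_{n-i} = 0` in `MvPolynomial σ R`. -/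
theorem alternating_sum_esymm_mul_hsymm {σ R : Type*} [Fintype σ] [DecidableEq σ] [CommRing R]
    (n : ℕ) (hn : 1 ≤ n) :
    ∑ i ∈ Finset.range (n + 1),
      (-1 : MvPolynomial σ R) ^ i * MvPolynomial.esymm σ R i
        * MvPolynomial.hsymm σ R (n - i) = 0 := by
  classical
  letI : LinearOrder σ := LinearOrder.lift' (Fintype.equivFin σ) (Fintype.equivFin σ).injective
  -- the set of multisets of size ≤ n
  set M : Finset (Multiset σ) := (Finset.range (n + 1)).biUnion
      (fun k => Finset.image Sym.toMultiset (Finset.univ : Finset (Sym σ k))) with hM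
  have hMmem : ∀ m : Multiset σ, m ∈ M ↔ Multiset.card m ≤ n := by
    intro m
    simp only [hM, Finset.mem_biUnion, Finset.mem_image, Finset.mem_range, Finset.mem_univ,
      true_and]
    constructor
    · rintro ⟨k, hk, s, rfl⟩
      have : Multiset.card s.toMultiset = k := s.2
      omega
    · intro h
      exact ⟨Multiset.card m, by omega, ⟨m, rfl⟩, rfl⟩
  -- hsymm as a sum over M
  have hh : ∀ j, j ≤ n → MvPolynomial.hsymm σ R j
      = ∑ m ∈ M.filter (fun m => Multiset.card m = j), (m.map X).prod := by
    intro j hj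
    rw [MvPolynomial.hsymm]
    refine Finset.sum_bij (fun s _ => s.toMultiset) ?_ ?_ ?_ ?_
    · intro s _
      simp only [Finset.mem_filter, hMmem]
      have : Multiset.card s.toMultiset = j := s.2
      omega
    · intro a _ b _ hab
      exact Subtype.ext hab
    · intro m hm
      simp only [Finset.mem_filter] at hm
      exact ⟨⟨m, hm.2⟩, Finset.mem_univ _, rfl⟩
    · intro s _; rfl
  -- the big index set and the summand
  set P : Finset (Finset σ × Multiset σ) :=
    (Finset.univ.powerset ×ˢ M).filter (fun p => p.1.card + Multiset.card p.2 = n) with hP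
  set f : Finset σ × Multiset σ → MvPolynomial σ R :=
    fun p => (-1 : MvPolynomial σ R) ^ p.1.card * (∏ x ∈ p.1, X x) * (p.2.map X).prod with hf
  have hPmem : ∀ p : Finset σ × Multiset σ,
      p ∈ P ↔ p.1.card + Multiset.card p.2 = n := by
    intro p
    simp only [hP, Finset.mem_filter, Finset.mem_product, Finset.mem_powerset, hMmem]
    constructor
    · tauto
    · intro h; exact ⟨⟨Finset.subset_univ _, by omega⟩, h⟩
  have hNE : ∀ (S : Finset σ) (m : Multiset σ), S.card + Multiset.card m = n →
      ((S.val + m).toFinset).Nonempty := by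
    intro S m h
    rw [Multiset.toFinset_nonempty]
    refine Multiset.card_pos.1 ?_
    rw [Multiset.card_add, Finset.card_def] at *
    omega
  -- Step A : LHS = ∑ p ∈ P, f p
  have stepA : ∑ i ∈ Finset.range (n + 1),
      (-1 : MvPolynomial σ R) ^ i * MvPolynomial.esymm σ R i
        * MvPolynomial.hsymm σ R (n - i) = ∑ p ∈ P, f p := by
    rw [← Finset.sum_fiberwise_of_maps_to (g := fun p => p.1.card) (t := Finset.range (n + 1))
      (fun p hp => by rw [hPmem] at hp; simp only [Finset.mem_range]; omega) f]
    refine Finset.sum_congr rfl ?_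
    intro i hi
    rw [Finset.mem_range] at hi
    have hi' : i ≤ n := by omega
    have hfib : P.filter (fun p => p.1.card = i)
        = (Finset.powersetCard i Finset.univ) ×ˢ
            (M.filter (fun m => Multiset.card m = n - i)) := by
      ext p
      simp only [Finset.mem_filter, Finset.mem_product, Finset.mem_powersetCard_univ,
        hPmem, hMmem]
      constructor
      · intro h; refine ⟨h.2, ?_, ?_⟩ <;> omega
      · intro h; refine ⟨by omega, h.1⟩
    rw [hfib, MvPolynomial.esymm, hh (n - i) (by omega), Finset.sum_product, mul_assoc,
      Finset.sum_mul_sum]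
    rw [Finset.mul_sum]
    refine Finset.sum_congr rfl ?_
    intro S hS
    rw [Finset.mul_sum]
    refine Finset.sum_congr rfl ?_
    intro m hm
    have hScard : S.card = i := Finset.mem_powersetCard_univ.1 hS
    simp only [hf, hScard]
    ring
  rw [stepA]
  -- Step B : the involution kills the sum
  refine Finset.sum_involution (fun p _ => asmh_inv p) ?_ ?_ ?_ ?_
  · -- f p + f (asmh_inv p) = 0
    rintro ⟨S, m⟩ hp
    rw [hPmem] at hp
    have hp' : S.card + Multiset.card m = n := hp
    have hne := hNE S m hp'
    set x := ((S.val + m).toFinset).min' hne with hx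
    have hxmem : x ∈ S.val + m := by
      rw [← Multiset.mem_toFinset]; exact Finset.min'_mem _ _
    show f (S, m) + f (asmh_inv (S, m)) = 0
    unfold asmh_inv
    dsimp only
    rw [dif_pos hne, ← hx]
    by_cases hxS : x ∈ S
    · rw [if_pos hxS]
      have hcard : S.card = (S.erase x).card + 1 := by
        rw [Finset.card_erase_of_mem hxS]
        have : 1 ≤ S.card := Finset.card_pos.2 ⟨x, hxS⟩
        omega
      simp only [hf, Multiset.map_cons, Multiset.prod_cons]
      rw [← Finset.mul_prod_erase _ _ hxS, hcard, pow_succ]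
      ring
    · rw [if_neg hxS]
      have hxm : x ∈ m := by
        rcases Multiset.mem_add.1 hxmem with h | h
        · exact absurd h hxS
        · exact h
      simp only [hf, Finset.prod_insert hxS, Finset.card_insert_of_notMem hxS, pow_succ]
      rw [← Multiset.cons_erase hxm]
      simp only [Multiset.map_cons, Multiset.prod_cons, Multiset.erase_cons_head]
      ring
  · -- asmh_inv p ≠ p
    rintro ⟨S, m⟩ hp _
    rw [hPmem] at hp
    have hp' : S.card + Multiset.card m = n := hp
    have hne := hNE S m hp'
    set x := ((S.val + m).toFinset).min' hne with hx
    show asmh_inv (S, m) ≠ (S, m)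
    unfold asmh_inv
    dsimp only
    rw [dif_pos hne, ← hx]
    by_cases hxS : x ∈ S
    · rw [if_pos hxS]
      intro hc
      have h1 : S.erase x = S := congrArg Prod.fst hc
      exact Finset.notMem_erase x S (h1.symm ▸ hxS)
    · rw [if_neg hxS]
      intro hc
      have h1 : insert x S = S := congrArg Prod.fst hc
      exact hxS (h1 ▸ Finset.mem_insert_self x S)
  · -- asmh_inv p ∈ P
    rintro ⟨S, m⟩ hp
    rw [hPmem] at hp
    have hp' : S.card + Multiset.card m = n := hp
    have hne := hNE S m hp'
    set x := ((S.val + m).toFinset).min' hne with hx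
    have hxmem : x ∈ S.val + m := by
      rw [← Multiset.mem_toFinset]; exact Finset.min'_mem _ _
    show asmh_inv (S, m) ∈ P
    unfold asmh_inv
    dsimp only
    rw [dif_pos hne, ← hx]
    by_cases hxS : x ∈ S
    · rw [if_pos hxS, hPmem]
      simp only [Finset.card_erase_of_mem hxS, Multiset.card_cons]
      have h2 : 1 ≤ S.card := Finset.card_pos.2 ⟨x, hxS⟩
      have h3 : Multiset.card (S, m).2 = Multiset.card m := rfl
      have h4 : #(S, m).1 = #S := rfl
      omega
    · rw [if_neg hxS, hPmem]
      have hxm : x ∈ m := by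
        rcases Multiset.mem_add.1 hxmem with h | h
        · exact absurd h hxS
        · exact h
      simp only [Finset.card_insert_of_notMem hxS, Multiset.card_erase_of_mem hxm]
      have h2 : 0 < Multiset.card m := Multiset.card_pos_iff_exists_mem.mpr ⟨x, hxm⟩
      have h3 : Multiset.card (S, m).2 = Multiset.card m := rfl
      have h4 : #(S, m).1 = #S := rfl
      have h5 : (Multiset.card m).pred + 1 = Multiset.card m := Nat.succ_pred_eq_of_pos h2
      omega
  · -- involution
    rintro ⟨S, m⟩ hp
    rw [hPmem] at hp
    have hp' : S.card + Multiset.card m = n := hp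
    have hne := hNE S m hp'
    set x := ((S.val + m).toFinset).min' hne with hx
    have hxmem : x ∈ S.val + m := by
      rw [← Multiset.mem_toFinset]; exact Finset.min'_mem _ _
    show asmh_inv (asmh_inv (S, m)) = (S, m)
    by_cases hxS : x ∈ S
    · have h1 : asmh_inv (S, m) = (S.erase x, x ::ₘ m) := by
        unfold asmh_inv
        dsimp only
        rw [dif_pos hne, ← hx, if_pos hxS]
      have hcomb : (S.erase x).val + (x ::ₘ m) = S.val + m := by
        rw [Finset.erase_val, Multiset.add_cons]
        conv_rhs => rw [← Multiset.cons_erase (show x ∈ S.val from hxS), Multiset.cons_add]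
      rw [h1]
      unfold asmh_inv
      dsimp only
      rw [hcomb, dif_pos hne, ← hx, if_neg (Finset.notMem_erase x S)]
      rw [Finset.insert_erase hxS, Multiset.erase_cons_head]
    · have hxm : x ∈ m := by
        rcases Multiset.mem_add.1 hxmem with h | h
        · exact absurd h hxS
        · exact h
      have h1 : asmh_inv (S, m) = (insert x S, m.erase x) := by
        unfold asmh_inv
        dsimp only
        rw [dif_pos hne, ← hx, if_neg hxS]
      have hcomb : (insert x S).val + m.erase x = S.val + m := by
        rw [Finset.insert_val, Multiset.ndinsert_of_notMem hxS, Multiset.cons_add,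
          ← Multiset.add_cons, Multiset.cons_erase hxm]
      rw [h1]
      unfold asmh_inv
      dsimp only
      rw [hcomb, dif_pos hne, ← hx, if_pos (Finset.mem_insert_self x S)]
      rw [Finset.erase_insert hxS, Multiset.cons_erase hxm]
end

section
/- Let σ be a finite type and R a commutative ring. Define q_n := Σ_{i=0}^{n} e_i · h_{n-i} in the multivariate polynomial ring over R in variables indexed by σ, where e_i is the i-th elementary symmetric polynomial and h_j is the j-th complete homogeneous symmetric polynomial. Then q_0 = 1, and for every n ≥ 1, Σ_{i=0}^{n} (-1)^{n-i} · q_i · q_{n-i} = 0. -/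
open Finset MvPolynomial

/-- alternating sum of `(-1)^card` over a nonempty powerset vanishes, in any ring -/
lemma qsymm_aux_pow_sum {A : Type*} [CommRing A] {σ : Type*} [DecidableEq σ] {t : Finset σ}
    (ht : t.Nonempty) : ∑ S ∈ t.powerset, (-1 : A) ^ S.card = 0 := by
  have h := Finset.sum_powerset_neg_one_pow_card_of_nonempty (x := t) ht
  have h2 := congrArg (Int.cast : ℤ → A) h
  push_cast at h2
  simpa using h2

lemma qsymm_eh_key {σ R : Type*} [Fintype σ] [DecidableEq σ] [CommRing R] {n : ℕ} (hn : 1 ≤ n) :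
    ∑ i ∈ Finset.range (n + 1),
      (-1 : MvPolynomial σ R) ^ i * MvPolynomial.esymm σ R i * MvPolynomial.hsymm σ R (n - i)
      = 0 := by
  classical
  set g : Finset σ → MvPolynomial σ R := fun S =>
    ∑ s ∈ Finset.univ.filter (fun s : Sym σ n => S.val ≤ s.1),
      (-1) ^ S.card * (s.1.map X).prod with hg
  have step1 : ∀ i ∈ Finset.range (n + 1),
      (-1 : MvPolynomial σ R) ^ i * esymm σ R i * hsymm σ R (n - i)
        = ∑ S ∈ powersetCard i Finset.univ, g S := by
    intro i hi
    rw [Finset.mem_range, Nat.lt_succ_iff] at hi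
    rw [esymm, hsymm, mul_assoc, Finset.sum_mul_sum, Finset.mul_sum]
    refine Finset.sum_congr rfl fun S hS => ?_
    have hScard : S.card = i := (Finset.mem_powersetCard.mp hS).2
    rw [hg, Finset.mul_sum]
    have hprod : ∀ t : Multiset σ,
        (∏ x ∈ S, (X x : MvPolynomial σ R)) * (t.map X).prod
          = ((S.val + t).map X).prod := by
      intro t
      rw [Multiset.map_add, Multiset.prod_add]
      rfl
    -- bijection between Sym σ (n-i) and the filtered set
    refine Finset.sum_bij' (fun t _ => (⟨S.val + t.1, by
        simp [t.2, hScard, Nat.add_sub_cancel' hi]⟩ : Sym σ n))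
      (fun s hs => (⟨s.1 - S.val, by
        rw [Finset.mem_filter] at hs
        rw [Multiset.card_sub hs.2]
        simp [s.2, hScard]⟩ : Sym σ (n - i)))
      ?_ ?_ ?_ ?_ ?_
    · intro t _
      exact Finset.mem_filter.mpr ⟨Finset.mem_univ _, Multiset.le_add_right _ _⟩
    · intro s hs
      exact Finset.mem_univ _
    · intro t ht
      ext : 1
      simp
    · intro s hs
      rw [Finset.mem_filter] at hs
      ext : 1
      exact add_tsub_cancel_of_le hs.2
    · intro t ht
      rw [← hprod, hScard]
  rw [Finset.sum_congr rfl step1]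
  -- extend the range
  set N := max n (Fintype.card σ) with hN
  have ext1 : ∑ i ∈ Finset.range (n + 1), ∑ S ∈ powersetCard i Finset.univ, g S
      = ∑ i ∈ Finset.range (N + 1), ∑ S ∈ powersetCard i Finset.univ, g S := by
    refine Finset.sum_subset (by gcongr; omega) ?_
    intro i _ hi
    rw [Finset.mem_range, Nat.lt_succ_iff, not_le] at hi
    refine Finset.sum_eq_zero fun S hS => ?_
    have hScard : S.card = i := (Finset.mem_powersetCard.mp hS).2
    rw [hg]
    refine Finset.sum_eq_zero fun s hs => ?_
    rw [Finset.mem_filter] at hs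
    have := Multiset.card_le_card hs.2
    simp [s.2, hScard] at this
    omega
  have ext2 : ∑ S ∈ (Finset.univ : Finset σ).powerset, g S
      = ∑ i ∈ Finset.range (N + 1), ∑ S ∈ powersetCard i Finset.univ, g S := by
    rw [Finset.sum_powerset]
    · refine Finset.sum_subset (by gcongr; simp [hN]) ?_
      intro i _ hi
      rw [Finset.mem_range, Nat.lt_succ_iff, not_le, Finset.card_univ] at hi
      rw [Finset.powersetCard_eq_empty.mpr (by simpa using hi)]
      simp
  rw [← ext1, ext2.symm] at *
  -- now swap the sums
  rw [hg]
  simp only [Finset.sum_filter]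
  rw [Finset.sum_comm]
  refine Finset.sum_eq_zero fun s _ => ?_
  rw [← Finset.sum_filter]
  have hfil : (Finset.univ : Finset σ).powerset.filter (fun S => S.val ≤ s.1)
      = s.1.toFinset.powerset := by
    ext S
    simp only [Finset.mem_filter, Finset.mem_powerset]
    constructor
    · rintro ⟨-, hle⟩ x hx
      exact Multiset.mem_toFinset.mpr (Multiset.mem_of_le hle (by simpa using hx))
    · intro h
      refine ⟨Finset.subset_univ _, (Multiset.le_iff_subset S.nodup).mpr ?_⟩
      intro x hx
      exact Multiset.mem_toFinset.mp (h (by simpa using hx))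
  rw [hfil, ← Finset.sum_mul]
  rw [qsymm_aux_pow_sum, zero_mul]
  rw [Multiset.toFinset_nonempty]
  intro h0
  have := s.2
  rw [h0] at this
  simp at this
  omega

/-- For `q_n := ∑_{i=0}^n e_i h_{n-i}` in `MvPolynomial σ R` one has `q_0 = 1` and,
for every `n ≥ 1`, `∑_{i=0}^{n} (-1)^{n-i} q_i q_{n-i} = 0`
(the coefficientwise form of `q(u)q(-u) = 1`). -/
theorem qsymm_relations {σ R : Type*} [Fintype σ] [DecidableEq σ] [CommRing R]
    (q : ℕ → MvPolynomial σ R)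
    (hq : ∀ n, q n = ∑ i ∈ Finset.range (n + 1),
      MvPolynomial.esymm σ R i * MvPolynomial.hsymm σ R (n - i)) :
    q 0 = 1 ∧
      ∀ n : ℕ, 1 ≤ n →
        ∑ i ∈ Finset.range (n + 1), (-1 : MvPolynomial σ R) ^ (n - i) * q i * q (n - i) = 0 := by
  classical
  have hq0 : q 0 = 1 := by simp [hq 0]
  refine ⟨hq0, fun n hn => ?_⟩
  set E : PowerSeries (MvPolynomial σ R) := PowerSeries.mk fun i => esymm σ R i with hE
  set H : PowerSeries (MvPolynomial σ R) := PowerSeries.mk fun i => hsymm σ R i with hH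
  have key2 : E * PowerSeries.rescale (-1) H = 1 := by
    refine PowerSeries.ext fun m => ?_
    rw [PowerSeries.coeff_mul, Finset.Nat.sum_antidiagonal_eq_sum_range_succ_mk]
    simp only [hE, hH, PowerSeries.coeff_rescale, PowerSeries.coeff_mk, PowerSeries.coeff_one]
    rcases Nat.eq_zero_or_pos m with rfl | hm
    · simp
    · rw [if_neg hm.ne']
      have : ∀ i ∈ Finset.range (m + 1),
          esymm σ R i * ((-1 : MvPolynomial σ R) ^ (m - i) * hsymm σ R (m - i))
            = (-1 : MvPolynomial σ R) ^ m * ((-1) ^ i * esymm σ R i * hsymm σ R (m - i)) := by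
        intro i hi
        rw [Finset.mem_range, Nat.lt_succ_iff] at hi
        have hpar : (-1 : MvPolynomial σ R) ^ (m - i) = (-1) ^ m * (-1) ^ i := by
          rw [← pow_add, neg_one_pow_eq_pow_mod_two, neg_one_pow_eq_pow_mod_two (n := m + i)]
          congr 1
          omega
        rw [hpar]; ring
      rw [Finset.sum_congr rfl this, ← Finset.mul_sum, qsymm_eh_key hm, mul_zero]
  have key3 : PowerSeries.rescale (-1) E * H = 1 := by
    have := congrArg (PowerSeries.rescale (-1 : MvPolynomial σ R)) key2
    rw [map_one, map_mul, PowerSeries.rescale_rescale] at this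
    norm_num [PowerSeries.rescale_one] at this
    exact this
  set Q : PowerSeries (MvPolynomial σ R) := PowerSeries.mk q with hQdef
  have hQ : Q = E * H := by
    refine PowerSeries.ext fun m => ?_
    rw [PowerSeries.coeff_mul, Finset.Nat.sum_antidiagonal_eq_sum_range_succ_mk]
    simp only [hQdef, hE, hH, PowerSeries.coeff_mk]
    exact hq m
  have hprod : Q * PowerSeries.rescale (-1) Q = 1 := by
    rw [hQ, map_mul]
    calc E * H * (PowerSeries.rescale (-1) E * PowerSeries.rescale (-1) H)
        = (E * PowerSeries.rescale (-1) H) * (PowerSeries.rescale (-1) E * H) := by ring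
      _ = 1 := by rw [key2, key3, one_mul]
  have := congrArg (PowerSeries.coeff n) hprod
  rw [PowerSeries.coeff_mul, Finset.Nat.sum_antidiagonal_eq_sum_range_succ_mk,
    PowerSeries.coeff_one, if_neg (by omega)] at this
  rw [← this]
  refine Finset.sum_congr rfl fun i _ => ?_
  simp only [hQdef, PowerSeries.coeff_rescale, PowerSeries.coeff_mk]
  ring
end

section
/- Let σ be a finite type and R a commutative ring. Define q_n := Σ_{i=0}^{n} e_i · h_{n-i} in the multivariate polynomial ring over R in variables indexed by σ, where e_i is the i-th elementary symmetric polynomial and h_j is the j-th complete homogeneous symmetric polynomial. Then for every r ≥ 1, 2·q_{2r} = (-1)^{r-1}·q_r^2 + 2·Σ_{s=1}^{r-1} (-1)^{s-1}·q_s·q_{2r-s}. -/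
section QsymmAux
open Finset MvPolynomial
variable (σ R : Type*) [Fintype σ] [DecidableEq σ] [CommRing R]

private lemma qsymm_sumcount (m : Multiset σ) : ∑ i : σ, m.count i = Multiset.card m := by
  rw [← Multiset.toFinset_sum_count_eq m]
  exact (Finset.sum_subset (Finset.subset_univ _) (by
    intro i _ hi
    simpa [Multiset.count_eq_zero] using fun h => hi (Multiset.mem_toFinset.mpr h))).symm

private lemma qsymm_geom (a : MvPolynomial σ R) :
    ((1 : PowerSeries (MvPolynomial σ R)) - PowerSeries.C (R := MvPolynomial σ R) a * PowerSeries.X) *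
      PowerSeries.mk (fun n => a ^ n) = 1 := by
  ext n
  cases n with
  | zero => simp
  | succ n =>
    simp [sub_mul, mul_comm (PowerSeries.C (R := MvPolynomial σ R) a), mul_assoc,
      PowerSeries.coeff_succ_mul_X, pow_succ, mul_comm a]

private lemma qsymm_coeffH (k : ℕ) :
    PowerSeries.coeff (R := MvPolynomial σ R) k
      (∏ i : σ, PowerSeries.mk fun n => (MvPolynomial.X i : MvPolynomial σ R) ^ n) =
    hsymm σ R k := by
  rw [PowerSeries.coeff_prod]
  simp only [PowerSeries.coeff_mk]
  rw [hsymm]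
  have hcard : ∀ l ∈ (Finset.univ : Finset σ).finsuppAntidiag k,
      Multiset.card (Finsupp.toMultiset l) = k := by
    intro l hl
    rw [Finsupp.card_toMultiset, Finsupp.sum_fintype _ _ (fun _ => rfl)]
    exact (Finset.mem_finsuppAntidiag.mp hl).1
  refine Finset.sum_bij' (fun l hl => (⟨Finsupp.toMultiset l, hcard l hl⟩ : Sym σ k))
    (fun s _ => Multiset.toFinsupp s.1) (fun _ _ => Finset.mem_univ _) ?_ ?_ ?_ ?_
  · intro s hs
    rw [Finset.mem_finsuppAntidiag]
    refine ⟨?_, Finset.subset_univ _⟩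
    change ∑ i, (Multiset.toFinsupp s.1) i = k
    simp only [Multiset.toFinsupp_apply]
    exact (qsymm_sumcount σ s.1).trans s.2
  · intro l hl; simp
  · intro s hs
    ext
    simp [Multiset.toFinsupp_toMultiset]
  · intro l hl
    rw [Finset.prod_multiset_map_count, Finsupp.toFinset_toMultiset]
    simp only [Finsupp.count_toMultiset]
    exact (Finset.prod_subset (Finset.subset_univ _) (by
      intro i _ hi
      simp [Finsupp.notMem_support_iff.mp hi])).symm

private lemma qsymm_coeff_one_sub_CX (a : MvPolynomial σ R) (m : ℕ) :
    PowerSeries.coeff (R := MvPolynomial σ R) m (1 - PowerSeries.C (R := MvPolynomial σ R) a * PowerSeries.X)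
      = if m = 0 then 1 else if m = 1 then -a else 0 := by
  rcases m with _ | _ | m <;> simp [PowerSeries.coeff_X, PowerSeries.coeff_one]

private lemma qsymm_coeffE (k : ℕ) :
    PowerSeries.coeff (R := MvPolynomial σ R) k
      (∏ i : σ, ((1 : PowerSeries (MvPolynomial σ R)) -
        PowerSeries.C (R := MvPolynomial σ R) (MvPolynomial.X i) * PowerSeries.X)) =
    (-1) ^ k * esymm σ R k := by
  rw [PowerSeries.coeff_prod]
  simp only [qsymm_coeff_one_sub_CX]
  rw [esymm, Finset.mul_sum]
  rw [← Finset.sum_filter_of_ne (p := fun l => ∀ i, l i ≤ 1) (by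
    intro l hl hne i
    by_contra hi
    push_neg at hi
    refine hne (Finset.prod_eq_zero (Finset.mem_univ i) ?_)
    rw [if_neg (by omega), if_neg (by omega)])]
  refine Finset.sum_nbij' (fun l => l.support) (fun S => Multiset.toFinsupp S.val) ?_ ?_ ?_ ?_ ?_
  · intro l hl
    rw [Finset.mem_filter, Finset.mem_finsuppAntidiag] at hl
    rw [Finset.mem_powersetCard_univ]
    obtain ⟨⟨hsum, -⟩, hle⟩ := hl
    rw [← hsum]
    rw [← Finset.sum_subset l.support.subset_univ (by
      intro i _ hi; exact Finsupp.notMem_support_iff.mp hi)]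
    rw [Finset.card_eq_sum_ones]
    refine Finset.sum_congr rfl fun i hi => ?_
    have := Finsupp.mem_support_iff.mp hi
    have := hle i
    omega
  · intro S hS
    rw [Finset.mem_powersetCard_univ] at hS
    rw [Finset.mem_filter, Finset.mem_finsuppAntidiag]
    refine ⟨⟨?_, Finset.subset_univ _⟩, ?_⟩
    · change ∑ i, (Multiset.toFinsupp S.val) i = k
      simp only [Multiset.toFinsupp_apply]
      rw [qsymm_sumcount, ← Finset.card_def, hS]
    · intro i
      simp only [Multiset.toFinsupp_apply]
      exact Multiset.nodup_iff_count_le_one.mp S.nodup i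
  · intro l hl
    rw [Finset.mem_filter] at hl
    ext i
    simp only [Multiset.toFinsupp_apply]
    by_cases hi : i ∈ l.support
    · rw [Multiset.count_eq_one_of_mem l.support.nodup hi]
      have := Finsupp.mem_support_iff.mp hi
      have := hl.2 i
      omega
    · rw [Multiset.count_eq_zero.mpr (by simpa using hi)]
      exact (Finsupp.notMem_support_iff.mp hi).symm
  · intro S hS
    show (Multiset.toFinsupp S.val).support = S
    rw [Multiset.toFinsupp_support, Finset.val_toFinset]
  · intro l hl
    rw [Finset.mem_filter, Finset.mem_finsuppAntidiag] at hl
    obtain ⟨⟨hsum, -⟩, hle⟩ := hl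
    rw [← Finset.prod_subset l.support.subset_univ (by
      intro i _ hi
      rw [Finsupp.notMem_support_iff.mp hi]; simp)]
    have hone : ∀ i ∈ l.support, (if l i = 0 then 1 else if l i = 1 then
        -(MvPolynomial.X i : MvPolynomial σ R) else 0) = -MvPolynomial.X i := by
      intro i hi
      have := Finsupp.mem_support_iff.mp hi
      have := hle i
      rw [if_neg (by omega), if_pos (by omega)]
    rw [Finset.prod_congr rfl hone]
    have hcard : l.support.card = k := by
      rw [← hsum, ← Finset.sum_subset l.support.subset_univ (by
        intro i _ hi; exact Finsupp.notMem_support_iff.mp hi), Finset.card_eq_sum_ones]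
      exact Finset.sum_congr rfl fun i hi => by
        have := Finsupp.mem_support_iff.mp hi; have := hle i; omega
    have : ∀ i ∈ l.support, -(MvPolynomial.X i : MvPolynomial σ R)
        = (-1) * MvPolynomial.X i := fun i _ => by ring
    rw [Finset.prod_congr rfl this, Finset.prod_mul_distrib, Finset.prod_const, hcard]

/-- `e(-t) h(t) = 1` as power series. -/
private lemma qsymm_EH :
    (PowerSeries.mk fun k => ((-1 : MvPolynomial σ R) ^ k * esymm σ R k)) *
      (PowerSeries.mk fun k => (hsymm σ R k : MvPolynomial σ R)) = 1 := by
  have hE : (PowerSeries.mk fun k => ((-1 : MvPolynomial σ R) ^ k * esymm σ R k)) =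
      ∏ i : σ, ((1 : PowerSeries (MvPolynomial σ R)) -
        PowerSeries.C (R := MvPolynomial σ R) (MvPolynomial.X i) * PowerSeries.X) := by
    ext k; rw [qsymm_coeffE]; simp
  have hH : (PowerSeries.mk fun k => (hsymm σ R k : MvPolynomial σ R)) =
      ∏ i : σ, PowerSeries.mk fun n => (MvPolynomial.X i : MvPolynomial σ R) ^ n := by
    ext k; rw [qsymm_coeffH]; simp
  rw [hE, hH, ← Finset.prod_mul_distrib,
    Finset.prod_congr rfl (fun i _ => qsymm_geom σ R (MvPolynomial.X i)),
    Finset.prod_const_one]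

end QsymmAux

/-- For `q_n := ∑_{i=0}^n e_i h_{n-i}` in `MvPolynomial σ R` and every `r ≥ 1`,
`2 q_{2r} = (-1)^{r-1} q_r^2 + 2 ∑_{s=1}^{r-1} (-1)^{s-1} q_s q_{2r-s}`
(the integral form of Macdonald's recursion III.8.2'). -/
theorem qsymm_even_recursion {σ R : Type*} [Fintype σ] [DecidableEq σ] [CommRing R]
    (q : ℕ → MvPolynomial σ R)
    (hq : ∀ n, q n = ∑ i ∈ Finset.range (n + 1),
      MvPolynomial.esymm σ R i * MvPolynomial.hsymm σ R (n - i)) :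
    ∀ r : ℕ, 1 ≤ r →
      2 * q (2 * r) =
        (-1 : MvPolynomial σ R) ^ (r - 1) * (q r) ^ 2 +
          2 * ∑ s ∈ Finset.Icc 1 (r - 1),
            (-1 : MvPolynomial σ R) ^ (s - 1) * q s * q (2 * r - s) := by
  classical
  set E : PowerSeries (MvPolynomial σ R) :=
    PowerSeries.mk fun k => (MvPolynomial.esymm σ R k : MvPolynomial σ R) with hE
  set H : PowerSeries (MvPolynomial σ R) :=
    PowerSeries.mk fun k => (MvPolynomial.hsymm σ R k : MvPolynomial σ R) with hH
  have key : (PowerSeries.rescale (-1 : MvPolynomial σ R) E) * H = 1 := by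
    rw [hE, PowerSeries.rescale_mk]
    exact qsymm_EH σ R
  have hqhat : PowerSeries.mk q = E * H := by
    ext n : 1
    rw [PowerSeries.coeff_mk, PowerSeries.coeff_mul, hq n,
      Finset.Nat.sum_antidiagonal_eq_sum_range_succ_mk]
    simp [hE, hH]
  have key2 : E * (PowerSeries.rescale (-1 : MvPolynomial σ R) H) = 1 := by
    have h := congrArg (PowerSeries.rescale (-1 : MvPolynomial σ R)) key
    rw [map_mul, map_one, PowerSeries.rescale_rescale, neg_mul_neg, one_mul,
      PowerSeries.rescale_one] at h
    simpa using h
  have hmain : (PowerSeries.rescale (-1 : MvPolynomial σ R) (PowerSeries.mk q)) *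
      PowerSeries.mk q = 1 := by
    rw [hqhat, map_mul]
    calc PowerSeries.rescale (-1 : MvPolynomial σ R) E *
          PowerSeries.rescale (-1 : MvPolynomial σ R) H * (E * H)
        = (PowerSeries.rescale (-1 : MvPolynomial σ R) E * H) *
          (E * PowerSeries.rescale (-1 : MvPolynomial σ R) H) := by ring
      _ = 1 := by rw [key, key2, one_mul]
  have hcoeff : ∀ s : ℕ, PowerSeries.coeff (R := MvPolynomial σ R) s
      (PowerSeries.rescale (-1 : MvPolynomial σ R) (PowerSeries.mk q)) = (-1) ^ s * q s := by
    intro s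
    rw [PowerSeries.rescale_mk, PowerSeries.coeff_mk]
  have master : ∀ n : ℕ, 1 ≤ n →
      ∑ s ∈ Finset.range (n + 1), (-1 : MvPolynomial σ R) ^ s * q s * q (n - s) = 0 := by
    intro n hn
    have h := congrArg (PowerSeries.coeff (R := MvPolynomial σ R) n) hmain
    rw [PowerSeries.coeff_mul, PowerSeries.coeff_one, if_neg (by omega),
      Finset.Nat.sum_antidiagonal_eq_sum_range_succ_mk] at h
    rw [← h]
    exact Finset.sum_congr rfl fun s hs => by rw [hcoeff, PowerSeries.coeff_mk, mul_assoc]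
  intro r hr
  have hm := master (2 * r) (by omega)
  have hsplit : ∑ s ∈ Finset.range (2 * r + 1),
        (-1 : MvPolynomial σ R) ^ s * q s * q (2 * r - s) =
      (∑ s ∈ Finset.range r, (-1 : MvPolynomial σ R) ^ s * q s * q (2 * r - s)) +
        (-1 : MvPolynomial σ R) ^ r * q r * q r +
        ∑ s ∈ Finset.range r, (-1 : MvPolynomial σ R) ^ s * q s * q (2 * r - s) := by
    rw [Finset.range_eq_Ico, ← Finset.sum_Ico_consecutive _ (by omega : 0 ≤ r)
      (by omega : r ≤ 2 * r + 1),
      Finset.sum_eq_sum_Ico_succ_bot (by omega : r < 2 * r + 1)]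
    rw [show 2 * r - r = r from by omega, ← Finset.range_eq_Ico]
    have hrefl : ∑ s ∈ Finset.Ico (r + 1) (2 * r + 1),
          (-1 : MvPolynomial σ R) ^ s * q s * q (2 * r - s) =
        ∑ s ∈ Finset.range r, (-1 : MvPolynomial σ R) ^ s * q s * q (2 * r - s) := by
      refine Finset.sum_nbij' (fun s => 2 * r - s) (fun s => 2 * r - s) ?_ ?_ ?_ ?_ ?_
      · intro s hs; rw [Finset.mem_Ico] at hs; simp only [Finset.mem_range]; omega
      · intro s hs; rw [Finset.mem_range] at hs; simp only [Finset.mem_Ico]; omega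
      · intro s hs; rw [Finset.mem_Ico] at hs; omega
      · intro s hs; rw [Finset.mem_range] at hs; omega
      · intro s hs
        rw [Finset.mem_Ico] at hs
        rw [show 2 * r - (2 * r - s) = s from by omega]
        have hpow : (-1 : MvPolynomial σ R) ^ (2 * r - s) = (-1 : MvPolynomial σ R) ^ s := by
          rw [neg_one_pow_eq_pow_mod_two, neg_one_pow_eq_pow_mod_two (n := s)]
          congr 1
          omega
        rw [hpow]
        ring
    rw [hrefl]
    ring
  rw [hsplit] at hm
  have hq0 : q 0 = 1 := by simp [hq 0]
  have hrange : ∑ s ∈ Finset.range r, (-1 : MvPolynomial σ R) ^ s * q s * q (2 * r - s) =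
      q (2 * r) + ∑ s ∈ Finset.Icc 1 (r - 1),
        (-1 : MvPolynomial σ R) ^ s * q s * q (2 * r - s) := by
    rw [Finset.range_eq_Ico, Finset.sum_eq_sum_Ico_succ_bot (by omega : 0 < r)]
    rw [pow_zero, one_mul, hq0, one_mul, Nat.sub_zero]
    congr 1
  rw [hrange] at hm
  have e1 : (-1 : MvPolynomial σ R) ^ r = -(-1 : MvPolynomial σ R) ^ (r - 1) := by
    conv_lhs => rw [show r = (r - 1) + 1 from by omega]
    rw [pow_succ, mul_neg_one]
  have e2 : ∀ s ∈ Finset.Icc 1 (r - 1), (-1 : MvPolynomial σ R) ^ (s - 1) * q s * q (2 * r - s) =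
      -((-1 : MvPolynomial σ R) ^ s * q s * q (2 * r - s)) := by
    intro s hs
    rw [Finset.mem_Icc] at hs
    have hp : (-1 : MvPolynomial σ R) ^ s = (-1 : MvPolynomial σ R) ^ (s - 1) * (-1) := by
      conv_lhs => rw [show s = (s - 1) + 1 from by omega]
      rw [pow_succ]
    rw [hp]
    ring
  rw [Finset.sum_congr rfl e2, Finset.sum_neg_distrib]
  rw [e1] at hm
  linear_combination hm
end
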